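/- Let 𝔸 = ℂ⟨x_1,…,x_m⟩ be the free associative ℂ-algebra on m generators and let F ∈ 𝔸 be multilinear, i.e., F is a ℂ-linear combination of the words x_{σ(1)}·x_{σ(2)}·⋯·x_{σ(m)} with σ ∈ S_m (each generator appears exactly once in every monomial of F). If for every n ≥ 1 and all matrices X_1,…,X_m ∈ M_n(ℂ) one has Trace(F(X_1,…,X_m)) = 0, then F ∈ [𝔸,𝔸], the ℂ-linear span of commutators a·b − b·a with a, b ∈ 𝔸. (The multilinear claim established in the proof of Proposition 4.1 of the paper.) -/

import Mathlib

/- STATEMENT 15 (multilinear claim in the proof of Proposition 4.1 of the paper):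
Let 𝔸 = ℂ⟨x_1,…,x_m⟩ and let F ∈ 𝔸 be multilinear, i.e. a ℂ-linear combination of the
words x_{σ(1)}⋯x_{σ(m)}, σ ∈ S_m. If Trace(F(X_1,…,X_m)) = 0 for every n ≥ 1 and all
X_1,…,X_m ∈ M_n(ℂ), then F ∈ [𝔸,𝔸].

𝔸 = ℂ⟨x_1,…,x_m⟩ is modelled as `FreeAlgebra ℂ (Fin m)`. -/

noncomputable section

/-- `[𝔸,𝔸]`: the ℂ-linear span of all commutators in `𝔸 = ℂ⟨x_1,…,x_m⟩`. -/
def commSpan (m : ℕ) : Submodule ℂ (FreeAlgebra ℂ (Fin m)) :=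
  Submodule.span ℂ {z | ∃ a b : FreeAlgebra ℂ (Fin m), z = a * b - b * a}


/-! Cyclically rotating a word changes it by a commutator, so modulo `[𝔸,𝔸]` the word
`w σ = x_{σ 0} ⋯ x_{σ (m-1)}` depends only on the coset `σC` of the cyclic subgroup
`C = {i ↦ j + i}` of `S_m`; hence `m • F ≡ ∑_σ (∑_j c (σ * (j + ·))) • w σ` for
`F = ∑_σ c σ • w σ`. Substituting the matrix units `X_{τ p} = E_{p, p+1}` (indices mod `m`)
turns `w σ` into a matrix of trace `1` if `σ ∈ τC` and `0` otherwise, so the trace condition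
says exactly that every coset sum `∑_j c (τ * (j + ·))` vanishes. -/

open Matrix

theorem List.rotate_ofFn {α : Type*} {k : ℕ} (f : Fin (k + 1) → α) (j : Fin (k + 1)) :
    (List.ofFn f).rotate j = List.ofFn fun i => f (j + i) := by
  refine List.ext_getElem (by simp) fun i _ _ => ?_
  simp only [List.getElem_ofFn, List.getElem_rotate, List.length_ofFn]
  congr 1
  ext
  simp [Fin.val_add, Nat.add_comm]

theorem List.prod_rotate_sub_prod_mem_span_commutators {R A : Type*} [Semiring R] [Ring A]
    [Module R A] (l : List A) (n : ℕ) :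
    (l.rotate n).prod - l.prod ∈ Submodule.span R {z | ∃ a b : A, z = a * b - b * a} := by
  induction n with
  | zero => simp
  | succ n ih =>
    rw [← List.rotate_rotate, ← sub_add_sub_cancel _ (l.rotate n).prod]
    refine Submodule.add_mem _ (Submodule.subset_span ?_) ih
    rcases l.rotate n with _ | ⟨a, t⟩
    · exact ⟨0, 0, by simp⟩
    · exact ⟨t.prod, a, by simp⟩

theorem Matrix.list_prod_ofFn_single {n α : Type*} [DecidableEq n] [Fintype n] [Semiring α] :
    ∀ (k : ℕ) (f g : Fin (k + 1) → n),
      (List.ofFn fun i => single (f i) (g i) (1 : α)).prod =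
        if ∀ i : Fin k, g i.castSucc = f i.succ then single (f 0) (g (Fin.last k)) 1 else 0
  | 0, f, g => by simp
  | k + 1, f, g => by
    rw [List.ofFn_succ, List.prod_cons, list_prod_ofFn_single k]
    simp only [Fin.forall_fin_succ, Fin.succ_last, Fin.castSucc_zero, Fin.succ_zero_eq_one,
      ← Fin.succ_castSucc]
    by_cases hrest : ∀ i : Fin k, g i.castSucc.succ = f i.succ.succ
    · by_cases h₀ : g 0 = f 1
      · simp [hrest, h₀]
      · simp [hrest, h₀, single_mul_single_of_ne _ _ _ _ h₀]
    · simp [hrest]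

theorem Fin.forall_apply_succ_eq_add_one_iff {k : ℕ} {π : Fin (k + 1) → Fin (k + 1)} :
    (∀ i : Fin k, π i.succ = π i.castSucc + 1) ↔ ∀ i, π i = π 0 + i := by
  refine ⟨fun h i => ?_,
    fun h i => by rw [h i.succ, h i.castSucc, add_assoc, Fin.coeSucc_eq_succ]⟩
  induction i using Fin.induction with
  | zero => simp
  | succ i ih => rw [h, ih, add_assoc, Fin.coeSucc_eq_succ]

theorem Matrix.trace_list_prod_ofFn_single_add_one {α : Type*} [Semiring α] {k : ℕ}
    (π : Fin (k + 1) → Fin (k + 1)) :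
    trace (List.ofFn fun i => single (π i) (π i + 1) (1 : α)).prod =
      if ∀ i, π i = π 0 + i then 1 else 0 := by
  rw [list_prod_ofFn_single]
  simp only [eq_comm (a := π _ + 1), Fin.forall_apply_succ_eq_add_one_iff]
  split_ifs with h
  · rw [h (Fin.last k), add_assoc, Fin.last_add_one, add_zero, trace_single_eq_same]
  · exact trace_zero _ _

section PermWord

variable (R : Type*) [CommSemiring R] {k : ℕ}

def permWord {m : ℕ} (σ : Equiv.Perm (Fin m)) : FreeAlgebra R (Fin m) :=
  (List.ofFn fun i => FreeAlgebra.ι R (σ i)).prod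

theorem lift_permWord {A : Type*} [Semiring A] [Algebra R A] {m : ℕ} (X : Fin m → A)
    (σ : Equiv.Perm (Fin m)) :
    FreeAlgebra.lift R X (permWord R σ) = (List.ofFn fun i => X (σ i)).prod := by
  simp [permWord, map_list_prod, List.map_ofFn, Function.comp_def]

theorem permWord_mul_addLeft_sub_mem_commSpan (σ : Equiv.Perm (Fin (k + 1))) (j : Fin (k + 1)) :
    permWord ℂ (σ * Equiv.addLeft j) - permWord ℂ σ ∈ commSpan (k + 1) := by
  have := (List.ofFn fun i => FreeAlgebra.ι ℂ (σ i)).prod_rotate_sub_prod_mem_span_commutators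
    (R := ℂ) j
  rwa [List.rotate_ofFn] at this

theorem sum_mul_addLeft_eq_zero_of_trace_eq_zero (c : Equiv.Perm (Fin (k + 1)) → R)
    (h : ∀ X : Fin (k + 1) → Matrix (Fin (k + 1)) (Fin (k + 1)) R,
      trace (FreeAlgebra.lift R X (∑ σ, c σ • permWord R σ)) = 0)
    (τ : Equiv.Perm (Fin (k + 1))) :
    ∑ j, c (τ * Equiv.addLeft j) = 0 := by
  have hτ := h fun x => single (τ⁻¹ x) (τ⁻¹ x + 1) 1
  simp only [map_sum, map_smul, trace_sum, trace_smul, lift_permWord,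
    trace_list_prod_ofFn_single_add_one, smul_eq_mul] at hτ
  rw [← hτ]
  refine Fintype.sum_of_injective (τ * Equiv.addLeft ·) ?_ _ _ (fun σ hσ => ?_) (fun j => ?_)
  · exact (mul_right_injective τ).comp fun i j hij => by simpa using Equiv.congr_fun hij 0
  · rw [if_neg, mul_zero]
    intro hσ'
    refine hσ ⟨τ⁻¹ (σ 0), Equiv.ext fun i => ?_⟩
    simp only [Equiv.Perm.mul_apply, Equiv.coe_addLeft]
    rw [← hσ' i]
    simp
  · rw [if_pos fun i => by simp, mul_one]

end PermWord

theorem sum_smul_permWord_mem_commSpan {k : ℕ} (c : Equiv.Perm (Fin (k + 1)) → ℂ)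
    (hc : ∀ τ, ∑ j, c (τ * Equiv.addLeft j) = 0) :
    ∑ σ, c σ • permWord ℂ σ ∈ commSpan (k + 1) := by
  set q := (commSpan (k + 1)).mkQ
  have hq (σ j) : q (permWord ℂ (σ * Equiv.addLeft j)) = q (permWord ℂ σ) :=
    (Submodule.Quotient.eq _).2 (permWord_mul_addLeft_sub_mem_commSpan σ j)
  have hrot (j : Fin (k + 1)) :
      q (∑ σ, c σ • permWord ℂ σ) = ∑ σ, c (σ * Equiv.addLeft j) • q (permWord ℂ σ) := by
    rw [map_sum, ← Equiv.sum_comp (Equiv.mulRight (Equiv.addLeft j))]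
    simp [hq]
  have : ((k + 1 : ℕ) : ℂ) • q (∑ σ, c σ • permWord ℂ σ) = 0 := calc
    _ = ∑ j : Fin (k + 1), q (∑ σ, c σ • permWord ℂ σ) := by
      rw [Finset.sum_const, Finset.card_univ, Fintype.card_fin, Nat.cast_smul_eq_nsmul]
    _ = ∑ σ, (∑ j, c (σ * Equiv.addLeft j)) • q (permWord ℂ σ) := by
      rw [Finset.sum_congr rfl fun j _ => hrot j, Finset.sum_comm]
      simp only [Finset.sum_smul]
    _ = 0 := by simp [hc]
  rw [smul_eq_zero, Nat.cast_eq_zero] at this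
  exact (Submodule.Quotient.mk_eq_zero _).1 (this.resolve_left k.succ_ne_zero)

theorem ginzburg_multilinear_trace_identity (m : ℕ) (F : FreeAlgebra ℂ (Fin m))
    -- F is multilinear: a ℂ-linear combination of the words x_{σ(1)}·x_{σ(2)}·⋯·x_{σ(m)}:
    (hF : F ∈ Submodule.span ℂ
      {g : FreeAlgebra ℂ (Fin m) | ∃ σ : Equiv.Perm (Fin m),
        g = (List.ofFn fun i : Fin m => FreeAlgebra.ι ℂ (σ i)).prod})
    -- the trace of F vanishes identically on matrices of every size n ≥ 1:
    (h : ∀ n : ℕ, 1 ≤ n → ∀ Xs : Fin m → Matrix (Fin n) (Fin n) ℂ,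
      Matrix.trace (FreeAlgebra.lift ℂ Xs F) = 0) :
    F ∈ commSpan m := by
  have hspan : {g | ∃ σ, g = permWord ℂ σ} = Set.range (permWord ℂ (m := m)) :=
    Set.ext fun _ => exists_congr fun _ => eq_comm
  obtain ⟨c, rfl⟩ := (Submodule.mem_span_range_iff_exists_fun ℂ).1 (hspan ▸ hF)
  cases m with
  | zero =>
    have hc : c 1 = 0 := by simpa [permWord] using h 1 le_rfl Fin.elim0
    simp [permWord, hc]
  | succ k =>
    exact sum_smul_permWord_mem_commSpan c
      (sum_mul_addLeft_eq_zero_of_trace_eq_zero ℂ c (h (k + 1) k.succ_pos))
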